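/- arXiv:1708.00704 — 3 statements merged into one kernel-verified Lean document; each statement's English description precedes it below -/
import Mathlib

section
/- Let G be a graph on c vertices with minimum degree at least 2 that is (c+1)-closed and non-Hamiltonian-connected, and suppose e(G) > h(c+1, ⌊c/2⌋ - p) for some integer p ≥ 0, where h(n,k) = C(n-k,2) + k(k-1). Then either (i) G contains a set S of s-1 vertices of degree at most s, for some 2 ≤ s ≤ ⌊c/2⌋ - p - 1, such that G - S is a clique; or (ii) G contains a set of t-1 vertices of degree at most t for some ⌊c/2⌋ - p + 1 ≤ t ≤ ⌊c/2⌋. -/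
/-!
Let `S` be a minimum vertex cover of the complement `Gᶜ`; it is nonempty because `G` is not
complete, hence not Hamiltonian-connected, and `V \ S` is a clique of `G`. By minimality every
`v ∈ S` has a non-neighbour `u ∉ S`, all of whose non-neighbours lie in `S`, so closure gives
`deg v ≤ c - deg u ≤ |S| + 1`. Thus `S` is alternative (i) when `|S| + 1 < ⌊c/2⌋ - p`, and
otherwise a set of `t - 1` vertices of degree at most `t = |S| + 1`, as long as `t ≤ ⌊c/2⌋`.
If `|S| ≥ ⌊c/2⌋`, closure makes the vertices of degree at most `⌊c/2⌋` a cover of `Gᶜ`, so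
there are at least `⌊c/2⌋` of them. The conclusion excludes only `t = k := ⌊c/2⌋ - p`, and there
`k - 1` vertices of degree at most `k` leave at most `C(c - k + 1, 2) + k(k - 1) = h(c + 1, k)`
edges.
-/

open SimpleGraph

/-- Degree of a vertex, as the cardinality of its neighbour set. -/
noncomputable def degN {V : Type*} (G : SimpleGraph V) (u : V) : ℕ := (G.neighborSet u).ncard

/-- A graph is Hamiltonian-connected if every two distinct vertices are joined by a
Hamiltonian path (a path visiting every vertex exactly once). -/
def HamConn {V : Type*} [DecidableEq V] (G : SimpleGraph V) : Prop :=
  ∀ x y : V, x ≠ y → ∃ p : G.Walk x y, p.IsHamiltonian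

/-- `h(n,k) = C(n-k,2) + k(k-1)`. -/
def hN (n k : ℕ) : ℕ := (n - k).choose 2 + k * (k - 1)

open Finset

theorem degN_eq_degree {V : Type*} (G : SimpleGraph V) (v : V) [Fintype (G.neighborSet v)] :
    degN G v = G.degree v := by
  rw [degN, Set.ncard_eq_toFinset_card', ← card_neighborFinset_eq_degree]
  rfl

theorem hamConn_top {V : Type*} [Fintype V] [DecidableEq V] : HamConn (⊤ : SimpleGraph V) := by
  intro x y hxy
  set l := x :: (((univ.erase x).erase y).toList ++ [y])
  have hl : l.Nodup := by
    simp +contextual [l, List.nodup_append, hxy, Finset.nodup_toList]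
  have hchain : l.IsChain (⊤ : SimpleGraph V).Adj := hl.isChain.imp fun _ _ h => (top_adj _ _).2 h
  have hhead : l.head (List.cons_ne_nil _ _) = x := rfl
  have hlast : l.getLast (List.cons_ne_nil _ _) = y := by simp [l]
  refine ⟨(Walk.ofSupport l _ hchain).copy hhead hlast, fun v => ?_⟩
  rw [Walk.support_copy, Walk.support_ofSupport]
  refine List.count_eq_one_of_mem hl ?_
  by_cases hvx : v = x <;> by_cases hvy : v = y <;> simp [l, *]

namespace SimpleGraph

variable {V : Type*} [Fintype V]

section Edges

variable [DecidableEq V] (G : SimpleGraph V) [DecidableRel G.Adj]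

theorem card_edgeFinset_le_choose_add_sum_degree (T : Finset V) :
    #G.edgeFinset ≤ (Fintype.card V - #T).choose 2 + ∑ v ∈ T, G.degree v := by
  rw [← card_inter_add_card_sdiff G.edgeFinset Tᶜ.sym2]
  refine add_le_add ?_ ?_
  · calc #(G.edgeFinset ∩ Tᶜ.sym2)
        ≤ #(Tᶜ.offDiag.image Sym2.mk.uncurry) := card_le_card fun e => by
          induction e using Sym2.ind with
          | h a b =>
            simp only [mem_inter, mem_edgeFinset, mem_edgeSet, mk_mem_sym2_iff, mem_image,
              mem_offDiag]
            exact fun ⟨hab, ha, hb⟩ => ⟨(a, b), ⟨ha, hb, hab.ne⟩, rfl⟩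
      _ = (Fintype.card V - #T).choose 2 := by rw [Sym2.card_image_offDiag, card_compl]
  · calc #(G.edgeFinset \ Tᶜ.sym2)
        ≤ #(T.biUnion fun v => G.incidenceFinset v) := card_le_card fun e he => by
          simp only [mem_sdiff, mem_sym2_iff, mem_compl, not_forall, not_not] at he
          obtain ⟨he, v, hve, hvT⟩ := he
          exact mem_biUnion.2 ⟨v, hvT, (mem_incidenceFinset _ _ _).2 ⟨mem_edgeFinset.1 he, hve⟩⟩
      _ ≤ ∑ v ∈ T, #(G.incidenceFinset v) := card_biUnion_le
      _ = ∑ v ∈ T, G.degree v := by simp only [card_incidenceFinset_eq_degree]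

theorem card_edgeFinset_le_hN (T : Finset V) {k : ℕ} (hT : #T = k - 1)
    (hdeg : ∀ v ∈ T, G.degree v ≤ k) : #G.edgeFinset ≤ hN (Fintype.card V + 1) k := by
  have hTV : #T ≤ Fintype.card V := card_le_univ T
  calc #G.edgeFinset ≤ (Fintype.card V - #T).choose 2 + ∑ v ∈ T, G.degree v :=
        G.card_edgeFinset_le_choose_add_sum_degree T
    _ ≤ (Fintype.card V + 1 - k).choose 2 + #T * k :=
        add_le_add (Nat.choose_le_choose 2 (by omega)) (by simpa using sum_le_card_nsmul T _ k hdeg)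
    _ = hN (Fintype.card V + 1) k := by rw [hN, hT, mul_comm]

end Edges

section VertexCover

theorem exists_isVertexCover_forall_card_le (H : SimpleGraph V) :
    ∃ S : Finset V, H.IsVertexCover ↑S ∧ ∀ S' : Finset V, H.IsVertexCover ↑S' → #S ≤ #S' := by
  classical
  obtain ⟨S, hS, hmin⟩ := exists_min_image {S : Finset V | H.IsVertexCover ↑S} card
    ⟨univ, by simp⟩
  exact ⟨S, (mem_filter.1 hS).2, fun S' hS' => hmin S' (mem_filter.2 ⟨mem_univ _, hS'⟩)⟩

variable {G : SimpleGraph V} [DecidableRel G.Adj]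

theorem IsVertexCover.degree_le_card {S : Finset V} (hS : G.IsVertexCover ↑S) {u : V}
    (hu : u ∉ S) : G.degree u ≤ #S := by
  rw [← card_neighborFinset_eq_degree]
  exact card_le_card fun w hw => (hS ((mem_neighborFinset G u w).1 hw)).resolve_left hu

theorem isVertexCover_compl_degree_le_half
    (hclosed : ∀ u v, u ≠ v → ¬ G.Adj u v → G.degree u + G.degree v ≤ Fintype.card V) :
    Gᶜ.IsVertexCover ↑({v | G.degree v ≤ Fintype.card V / 2} : Finset V) := by
  intro u v huv
  have := hclosed u v huv.ne ((compl_adj G u v).1 huv).2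
  simp only [coe_filter, mem_univ, true_and, Set.mem_ofPred_eq]
  omega

variable [DecidableEq V]

theorem IsVertexCover.exists_adj_notMem_of_forall_card_le {S : Finset V}
    (hS : G.IsVertexCover ↑S) (hmin : ∀ S' : Finset V, G.IsVertexCover ↑S' → #S ≤ #S')
    {v : V} (hv : v ∈ S) : ∃ u ∉ S, G.Adj v u := by
  by_contra! h
  have hcover : G.IsVertexCover ↑(S.erase v) := by
    intro a b hab
    simp only [coe_erase, Set.mem_sdiff, mem_coe, Set.mem_singleton_iff]
    by_cases ha : a = v
    · subst ha
      exact .inr ⟨by_contra fun hb => h b hb hab, hab.ne'⟩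
    by_cases hb : b = v
    · subst hb
      exact .inl ⟨by_contra fun ha => h a ha hab.symm, hab.ne⟩
    exact (hS hab).imp (⟨·, ha⟩) (⟨·, hb⟩)
  have := hmin _ hcover
  rw [card_erase_of_mem hv] at this
  have := card_pos.2 ⟨v, hv⟩
  omega

theorem degree_le_card_add_one_of_isVertexCover_compl
    (hclosed : ∀ u v, u ≠ v → ¬ G.Adj u v → G.degree u + G.degree v ≤ Fintype.card V)
    {S : Finset V} (hS : Gᶜ.IsVertexCover ↑S)
    (hmin : ∀ S' : Finset V, Gᶜ.IsVertexCover ↑S' → #S ≤ #S') {v : V} (hv : v ∈ S) :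
    G.degree v ≤ #S + 1 := by
  obtain ⟨u, hu, hvu⟩ := hS.exists_adj_notMem_of_forall_card_le hmin hv
  have hu_deg := hS.degree_le_card hu
  have hsum := hclosed v u hvu.ne ((compl_adj G v u).1 hvu).2
  rw [degree_compl] at hu_deg
  have := G.degree_lt_card_verts u
  omega

theorem exists_clique_compl_or_exists_low_degree
    (hclosed : ∀ u v, u ≠ v → ¬ G.Adj u v → G.degree u + G.degree v ≤ Fintype.card V)
    (htop : G ≠ ⊤) {K : ℕ} (hK : K ≤ Fintype.card V / 2) :
    (∃ s, 2 ≤ s ∧ s ≤ K - 1 ∧ ∃ S : Finset V, #S = s - 1 ∧ (∀ v ∈ S, G.degree v ≤ s) ∧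
      G.IsClique (↑S : Set V)ᶜ) ∨
    (∃ t, K ≤ t ∧ t ≤ Fintype.card V / 2 ∧
      ∃ T : Finset V, #T = t - 1 ∧ ∀ v ∈ T, G.degree v ≤ t) := by
  obtain ⟨S, hS, hmin⟩ := Gᶜ.exists_isVertexCover_forall_card_le
  have hSdeg : ∀ v ∈ S, G.degree v ≤ #S + 1 := fun _ =>
    degree_le_card_add_one_of_isVertexCover_compl hclosed hS hmin
  have hSpos : 0 < #S := by
    rw [card_pos, nonempty_iff_ne_empty]
    rintro rfl
    exact htop (compl_eq_bot.1 (by simpa using hS))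
  by_cases hsmall : #S + 1 ≤ K - 1
  · exact .inl ⟨#S + 1, by omega, hsmall, S, rfl, hSdeg,
      G.isIndepSet_compl.1 (isIndepSet_compl_iff_isVertexCover.2 hS)⟩
  by_cases hmid : #S + 1 ≤ Fintype.card V / 2
  · exact .inr ⟨#S + 1, by omega, hmid, S, rfl, hSdeg⟩
  set L : Finset V := {v | G.degree v ≤ Fintype.card V / 2}
  have hSL : #S ≤ #L := hmin L (isVertexCover_compl_degree_le_half hclosed)
  obtain ⟨T, hTL, hT⟩ := exists_subset_card_eq (show Fintype.card V / 2 - 1 ≤ #L by omega)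
  exact .inr ⟨Fintype.card V / 2, hK, le_rfl, T, hT, fun v hv => (mem_filter.1 (hTL hv)).2⟩

end VertexCover

end SimpleGraph

theorem stmt6_general {V : Type*} [Fintype V] [DecidableEq V] (G : SimpleGraph V) (c p : ℕ)
    (hc : Fintype.card V = c)
    (hclosed : ∀ u v : V, u ≠ v → ¬ G.Adj u v → degN G u + degN G v ≤ c)
    (hnc : ¬ HamConn G)
    (he : G.edgeSet.ncard > hN (c + 1) (c / 2 - p)) :
    (∃ s : ℕ, 2 ≤ s ∧ s ≤ c / 2 - p - 1 ∧
      ∃ S : Finset V, S.card = s - 1 ∧ (∀ v ∈ S, degN G v ≤ s) ∧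
        G.IsClique ((S : Set V)ᶜ)) ∨
    (∃ t : ℕ, c / 2 - p + 1 ≤ t ∧ t ≤ c / 2 ∧
      ∃ T : Finset V, T.card = t - 1 ∧ ∀ v ∈ T, degN G v ≤ t) := by
  classical
  subst hc
  simp only [degN_eq_degree] at hclosed ⊢
  have htop : G ≠ ⊤ := by
    rintro rfl
    exact hnc hamConn_top
  rcases G.exists_clique_compl_or_exists_low_degree hclosed htop (Nat.sub_le _ p) with
    hsmall | ⟨t, hKt, ht, T, hT, hTdeg⟩
  · exact .inl hsmall
  obtain rfl | hKt := hKt.eq_or_lt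
  · have := G.card_edgeFinset_le_hN T hT hTdeg
    rw [← coe_edgeFinset, Set.ncard_coe_finset] at he
    omega
  · exact .inr ⟨t, hKt, ht, T, hT, hTdeg⟩

/-- Structure of `(c+1)`-closed non-Hamiltonian-connected graphs on `c` vertices with
minimum degree at least 2 and more than `h(c+1, ⌊c/2⌋-p)` edges. -/
theorem stmt6 {V : Type*} [Fintype V] [DecidableEq V] (G : SimpleGraph V) (c p : ℕ)
    (hc : Fintype.card V = c) (hmin : ∀ v : V, 2 ≤ degN G v)
    (hclosed : ∀ u v : V, u ≠ v → ¬ G.Adj u v → degN G u + degN G v ≤ c)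
    (hnc : ¬ HamConn G)
    (he : G.edgeSet.ncard > hN (c + 1) (c / 2 - p)) :
    (∃ s : ℕ, 2 ≤ s ∧ s ≤ c / 2 - p - 1 ∧
      ∃ S : Finset V, S.card = s - 1 ∧ (∀ v ∈ S, degN G v ≤ s) ∧
        G.IsClique ((S : Set V)ᶜ)) ∨
    (∃ t : ℕ, c / 2 - p + 1 ≤ t ∧ t ≤ c / 2 ∧
      ∃ T : Finset V, T.card = t - 1 ∧ ∀ v ∈ T, degN G v ≤ t) :=
  stmt6_general G c p hc hclosed hnc he
end

section
/- Let G be a graph and C a locally maximal cycle of G. Then C is also a locally maximal cycle of the C-closure of G (the graph obtained from G by replacing the induced subgraph on V(C) by its (c+1)-closure, where c = |C|). -/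
open SimpleGraph

/-- A graph is 2-connected: at least 3 vertices and deleting any vertex leaves it connected. -/
def TwoConnected {V : Type*} [Fintype V] (G : SimpleGraph V) : Prop :=
  3 ≤ Fintype.card V ∧
    ∀ v : V, (((⊤ : G.Subgraph).deleteVerts {v}).coe).Connected

/-- `p` is a longest cycle of `G`. -/
def IsLongestCycle {V : Type*} (G : SimpleGraph V) {v0 : V} (p : G.Walk v0 v0) : Prop :=
  p.IsCycle ∧ ∀ (w : V) (q : G.Walk w w), q.IsCycle → q.length ≤ p.length

/-- `R` is the vertex set of a connected component of `G - Cs` (the graph obtained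
from `G` by deleting the vertex set `Cs`). -/
def IsCompOutside {V : Type*} (G : SimpleGraph V) (Cs R : Set V) : Prop :=
  R.Nonempty ∧ Disjoint R Cs ∧ (G.induce R).Connected ∧
    ∀ u ∈ R, ∀ v : V, G.Adj u v → v ∈ R ∪ Cs
/-- An edge (of `Sym2 V`) crossing between `Cs` and its complement: it has an endpoint in
`Cs` and an endpoint outside `Cs`. -/
def crossEdge {V : Type*} (Cs : Set V) (e : Sym2 V) : Prop :=
  (∃ a ∈ e, a ∈ Cs) ∧ (∃ b ∈ e, b ∉ Cs)

open Classical in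
/-- The number of edges in the list `l` having exactly one endpoint in `Cs`. -/
noncomputable def crossCount {V : Type*} (Cs : Set V) (l : List (Sym2 V)) : ℕ :=
  l.countP (fun e => decide (crossEdge Cs e))

/-- The cycle `p` is locally maximal in `G`: there is no cycle `q` with `|E(q)| > |E(p)|`
using at most two edges with exactly one endpoint on `p`. -/
def IsLocallyMaximal {V : Type*} (G : SimpleGraph V) {v0 : V} (p : G.Walk v0 v0) : Prop :=
  p.IsCycle ∧ ∀ (w : V) (q : G.Walk w w), q.IsCycle →
    ¬ (p.length < q.length ∧ crossCount {x | x ∈ p.support} q.edges ≤ 2)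
/-- Degree of `u` within the vertex set `Cs`: number of neighbours of `u` lying in `Cs`. -/
noncomputable def degIn {V : Type*} (G : SimpleGraph V) (Cs : Set V) (u : V) : ℕ :=
  (G.neighborSet u ∩ Cs).ncard

/-- One step of the `(c+1)`-closure operation on the induced subgraph on `Cs`: join a
nonadjacent pair in `Cs` whose degree sum within `Cs` is at least `c+1`. -/
def CStep {V : Type*} (c : ℕ) (Cs : Set V) (G G' : SimpleGraph V) : Prop :=
  ∃ u v, u ∈ Cs ∧ v ∈ Cs ∧ u ≠ v ∧ ¬ G.Adj u v ∧
    c + 1 ≤ degIn G Cs u + degIn G Cs v ∧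
    G' = G ⊔ SimpleGraph.fromEdgeSet {s(u, v)}

/-- `H` is the `C`-closure of `G` for the cycle `p` (of length `c = |V(C)|`): it is
obtained from `G` by recursively joining nonadjacent pairs on `C` whose degree sum within
`V(C)` is at least `c+1`, until no such pair remains. -/
def IsCClosure {V : Type*} (G : SimpleGraph V) {v0 : V} (p : G.Walk v0 v0)
    (H : SimpleGraph V) : Prop :=
  Relation.ReflTransGen (CStep p.length {x | x ∈ p.support}) G H ∧
    ∀ u v : V, u ∈ p.support → v ∈ p.support → u ≠ v → ¬ H.Adj u v →
      degIn H {x | x ∈ p.support} u + degIn H {x | x ∈ p.support} v < p.length + 1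


/-!
Each closure step joins nonadjacent `u, v ∈ V(C)` with `deg_C u + deg_C v ≥ c + 1`. Suppose
the new graph had a cycle longer than `c` with at most two edges crossing `V(C)`. It must use
`uv`, so deleting `uv` leaves a `u`–`v` path `P` of length `≥ c` in the old graph, still with
at most two crossing edges. A Bondy–Chvátal count now gives `deg_C u + deg_C v ≤ c`: a
neighbour of `v` on `P` followed on `P` by a neighbour of `u`, or a common neighbour off `P`,
would close a longer cycle with no new crossing edges, and `P` leaves `V(C)` at most once.
Hence the property "no such cycle is longer than `c`" survives every closure step.
-/

section Crossing

variable {V : Type*} {Cs : Set V}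

theorem crossEdge_mk {a b : V} : crossEdge Cs s(a, b) ↔ (a ∈ Cs ↔ b ∉ Cs) := by
  simp only [crossEdge, Sym2.mem_iff, exists_eq_or_imp, exists_eq_left]
  tauto

open Classical in
theorem crossCount_cons (e : Sym2 V) (l : List (Sym2 V)) :
    crossCount Cs (e :: l) = crossCount Cs l + if crossEdge Cs e then 1 else 0 := by
  simp [crossCount, List.countP_cons]

theorem crossCount_append (l l' : List (Sym2 V)) :
    crossCount Cs (l ++ l') = crossCount Cs l + crossCount Cs l' :=
  List.countP_append ..

theorem List.Perm.crossCount_eq {l l' : List (Sym2 V)} (h : l.Perm l') :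
    crossCount Cs l = crossCount Cs l' :=
  h.countP_eq _

theorem crossCount_reverse (l : List (Sym2 V)) : crossCount Cs l.reverse = crossCount Cs l :=
  (List.reverse_perm l).crossCount_eq

theorem crossCount_cons_mk_of_mem {a b : V} (ha : a ∈ Cs) (hb : b ∈ Cs) (l : List (Sym2 V)) :
    crossCount Cs (s(a, b) :: l) = crossCount Cs l := by
  simp [crossCount_cons, crossEdge_mk, ha, hb]

end Crossing

namespace SimpleGraph

open Finset

variable {V : Type*} {G : SimpleGraph V}

namespace Walk

open Classical in
/-- Exits from `Cs` and entries into `Cs` alternate along a walk. -/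
theorem two_mul_countP_exit {Cs : Set V} :
    ∀ {x y : V} (P : G.Walk x y),
      2 * P.darts.countP (fun d => d.fst ∈ Cs ∧ d.snd ∉ Cs) + (if x ∈ Cs then 0 else 1) =
        crossCount Cs P.edges + if y ∈ Cs then 0 else 1
  | _, _, .nil => by simp [crossCount]
  | x, _, .cons (v := z) h P => by
    have ih := P.two_mul_countP_exit (Cs := Cs)
    rw [darts_cons, List.countP_cons, edges_cons, crossCount_cons]
    by_cases hx : x ∈ Cs <;> by_cases hz : z ∈ Cs <;>
      simp [crossEdge_mk, hx, hz] at ih ⊢ <;> omega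

theorem exists_eq_append_cons_of_mem_darts :
    ∀ {u v : V} (p : G.Walk u v) {d : G.Dart}, d ∈ p.darts →
      ∃ (p₁ : G.Walk u d.fst) (p₂ : G.Walk d.snd v), p = p₁.append (cons d.adj p₂)
  | _, _, .nil, _, hd => by simp at hd
  | _, _, .cons h p, d, hd => by
    rw [darts_cons, List.mem_cons] at hd
    rcases hd with rfl | hd
    · exact ⟨nil, p, rfl⟩
    · obtain ⟨p₁, p₂, rfl⟩ := p.exists_eq_append_cons_of_mem_darts hd
      exact ⟨cons h p₁, p₂, rfl⟩

theorem exists_mem_darts_fst_eq {u v b : V} (p : G.Walk u v) (hb : b ∈ p.support)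
    (hbv : b ≠ v) : ∃ d ∈ p.darts, d.fst = b := by
  rw [← map_fst_darts_append, List.mem_append, List.mem_map, List.mem_singleton] at hb
  exact hb.resolve_right hbv

theorem card_filter_mem_support_le [DecidableEq V] {u v : V} (p : G.Walk u v)
    {B : Finset V} (hv : v ∉ B) :
    #(B.filter (· ∈ p.support)) ≤ #(p.darts.toFinset.filter fun d => d.fst ∈ B) := by
  refine card_le_card_of_surjOn (fun d => d.fst) fun b hb => ?_
  simp only [coe_filter, Set.mem_ofPred_eq] at hb
  obtain ⟨d, hd, rfl⟩ := p.exists_mem_darts_fst_eq hb.2 (fun h => hv (h ▸ hb.1))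
  exact ⟨d, by simp [hd, hb.1], rfl⟩

theorem card_filter_exit_le_one [DecidableEq V] {S : Finset V} {x y : V} (p : G.Walk x y)
    (hx : x ∈ S) (hy : y ∈ S) (hcross : crossCount ↑S p.edges ≤ 2) :
    #(p.darts.toFinset.filter fun d => d.fst ∈ S ∧ d.snd ∉ S) ≤ 1 := by
  have hexit := p.two_mul_countP_exit (Cs := ↑S)
  simp only [mem_coe, hx, hy, if_true] at hexit
  calc _ ≤ #(p.darts.filter fun d => d.fst ∈ S ∧ d.snd ∉ S).toFinset :=
        card_le_card fun d hd => by simp_all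
    _ ≤ p.darts.countP fun d => d.fst ∈ S ∧ d.snd ∉ S :=
        List.countP_eq_length_filter .. ▸ List.toFinset_card_le _
    _ ≤ 1 := by omega

theorem IsPath.injOn_snd_darts {u v : V} {p : G.Walk u v} (hp : p.IsPath) :
    Set.InjOn (fun d : G.Dart => d.snd) {d | d ∈ p.darts} := fun _ hd _ hd' =>
  List.inj_on_of_nodup_map (p.map_snd_darts ▸ hp.support_nodup.sublist (List.tail_sublist _))
    hd hd'

theorem IsPath.snd_ne_start_of_mem_darts {u v : V} {p : G.Walk u v} (hp : p.IsPath)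
    {d : G.Dart} (hd : d ∈ p.darts) : d.snd ≠ u := by
  intro h
  have hnd := hp.support_nodup
  rw [← cons_tail_support, List.nodup_cons, ← map_snd_darts] at hnd
  exact hnd.1 (List.mem_map.mpr ⟨d, hd, h⟩)

theorem IsCycle.exists_isPath_of_mem_darts {w : V} {q : G.Walk w w} (hq : q.IsCycle)
    {d : G.Dart} (hd : d ∈ q.darts) :
    ∃ r : G.Walk d.snd d.fst, r.IsPath ∧ q.edges.Perm (d.edge :: r.edges) := by
  obtain ⟨q₁, q₂, rfl⟩ := q.exists_eq_append_cons_of_mem_darts hd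
  refine ⟨q₂.append q₁, ?_, ?_⟩
  · have h := hq.support_nodup
    rw [support_append, support_cons, List.tail_cons, ← cons_tail_support q₁] at h
    simp only [List.cons_append, List.tail_cons] at h
    rw [isPath_def, support_append]
    exact List.perm_append_comm.nodup_iff.mp h
  · rw [edges_append, edges_cons, edges_append]
    exact List.perm_middle.trans (List.perm_append_comm.cons _)

theorem IsCycle.card_toFinset_support [DecidableEq V] {u : V} {p : G.Walk u u}
    (hp : p.IsCycle) : #p.support.toFinset = p.length := by
  rw [← cons_tail_support, List.toFinset_cons,
    insert_eq_of_mem (List.mem_toFinset.mpr (p.end_mem_tail_support hp.not_nil)),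
    List.toFinset_card_of_nodup hp.support_nodup, List.length_tail, length_support,
    Nat.add_sub_cancel]

end Walk

theorem degIn_coe_finset [DecidableRel G.Adj] (S : Finset V) (u : V) :
    degIn G ↑S u = #(S.filter (G.Adj u)) := by
  rw [degIn, ← Set.ncard_coe_finset, coe_filter]
  congr 1
  ext x
  simp [and_comm]

theorem mem_edgeSet_of_mem_edgeSet_sup_fromEdgeSet {u v : V} {e : Sym2 V}
    (he : e ∈ (G ⊔ fromEdgeSet {s(u, v)}).edgeSet) (hne : e ≠ s(u, v)) : e ∈ G.edgeSet := by
  simpa [edgeSet_sup, edgeSet_fromEdgeSet, hne] using he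

/-- A cycle `C` is locally maximal exactly when this holds for `Cs = V(C)` and `c = |C|`. -/
def LocalCycleBound (G : SimpleGraph V) (Cs : Set V) (c : ℕ) : Prop :=
  ∀ (w : V) (q : G.Walk w w), q.IsCycle → crossCount Cs q.edges ≤ 2 → q.length ≤ c

open Walk

section Constructions

variable {Cs : Set V} {c : ℕ}

theorem LocalCycleBound.not_adj_and_adj_of_notMem_support (hG : LocalCycleBound G Cs c)
    {u v w : V} (hu : u ∈ Cs) (hv : v ∈ Cs) (hw : w ∈ Cs) (huv : u ≠ v) {P : G.Walk u v}
    (hP : P.IsPath) (hlen : c ≤ P.length) (hcross : crossCount Cs P.edges ≤ 2)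
    (hwP : w ∉ P.support) : ¬ (G.Adj u w ∧ G.Adj v w) := by
  rintro ⟨huw, hvw⟩
  have hcyc : (cons huw (cons hvw.symm P.reverse)).IsCycle := by
    rw [cons_isCycle_iff, cons_isPath_iff, support_reverse, List.mem_reverse, edges_cons,
      List.mem_cons, edges_reverse, List.mem_reverse]
    refine ⟨⟨hP.reverse, hwP⟩, ?_⟩
    rintro (h | h)
    · rcases Sym2.eq_iff.mp h with ⟨rfl, -⟩ | ⟨rfl, -⟩
      · exact hwP P.start_mem_support
      · exact huv rfl
    · exact hwP (P.snd_mem_support_of_mem_edges h)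
  have := hG _ _ hcyc (by
    rwa [edges_cons, edges_cons, crossCount_cons_mk_of_mem hu hw,
      crossCount_cons_mk_of_mem hw hv, edges_reverse, crossCount_reverse])
  simp only [length_cons, length_reverse] at this
  omega

theorem LocalCycleBound.not_adj_and_adj_of_mem_darts (hG : LocalCycleBound G Cs c)
    {u v : V} (hu : u ∈ Cs) (hv : v ∈ Cs) (huv : ¬ G.Adj u v) {P : G.Walk u v}
    (hP : P.IsPath) (hlen : c ≤ P.length) (hcross : crossCount Cs P.edges ≤ 2)
    {d : G.Dart} (hd : d ∈ P.darts) (hb : d.fst ∈ Cs) (ha : d.snd ∈ Cs) :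
    ¬ (G.Adj v d.fst ∧ G.Adj u d.snd) := by
  rintro ⟨hvb, hua⟩
  obtain ⟨P₁, P₂, rfl⟩ := P.exists_eq_append_cons_of_mem_darts hd
  have hsupp := hP.support_nodup
  rw [support_append, support_cons, List.tail_cons] at hsupp
  have hdisj := List.disjoint_of_nodup_append hsupp
  have hcyc : (cons hua (P₂.append (cons hvb P₁.reverse))).IsCycle := by
    rw [cons_isCycle_iff, isPath_def, support_append, support_cons, List.tail_cons,
      support_reverse, edges_append, edges_cons, edges_reverse, List.mem_append, List.mem_cons,
      List.mem_reverse]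
    refine ⟨(List.perm_append_comm.trans
      (List.Perm.append_left _ (List.reverse_perm _).symm)).nodup_iff.mp hsupp, ?_⟩
    rintro (h | h | h)
    · exact hdisj P₁.start_mem_support (P₂.fst_mem_support_of_mem_edges h)
    · rcases Sym2.eq_iff.mp h with ⟨-, h⟩ | ⟨-, h⟩
      · exact d.adj.ne h.symm
      · exact huv (h ▸ hua)
    · exact hdisj (P₁.snd_mem_support_of_mem_edges h) P₂.start_mem_support
  have := hG _ _ hcyc (by
    rw [edges_cons, crossCount_cons_mk_of_mem hu ha, edges_append, edges_cons,
      crossCount_append, crossCount_cons_mk_of_mem hv hb, edges_reverse, crossCount_reverse]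
    rw [edges_append, edges_cons, crossCount_append, crossCount_cons] at hcross
    omega)
  simp only [length_cons, length_append, length_reverse] at this hlen
  omega

end Constructions

variable {S : Finset V}

/-- The neighbours of `u`, the neighbours of `v` off `P` and the successors along `P` of the
neighbours of `v` on `P` are disjoint subsets of `S \ {u}`, apart from at most one successor
outside `S` (where `P` leaves `S`). -/
theorem LocalCycleBound.degIn_add_degIn_le (hG : LocalCycleBound G ↑S #S)
    {u v : V} (hu : u ∈ S) (hv : v ∈ S) (hne : u ≠ v) (huv : ¬ G.Adj u v) {P : G.Walk u v}
    (hP : P.IsPath) (hlen : #S ≤ P.length) (hcross : crossCount ↑S P.edges ≤ 2) :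
    degIn G ↑S u + degIn G ↑S v ≤ #S := by
  classical
  rw [degIn_coe_finset, degIn_coe_finset]
  set A := S.filter (G.Adj u)
  set B := S.filter (G.Adj v)
  set Boff := B.filter (· ∉ P.support)
  set D := P.darts.toFinset.filter (fun d => d.fst ∈ B)
  set M := (D.filter (fun d => d.snd ∈ S)).image (fun d => d.snd)
  have hB : #B ≤ #D + #Boff := by
    rw [← card_filter_add_card_filter_not (p := (· ∈ P.support))]
    gcongr
    exact P.card_filter_mem_support_le fun h => G.loopless.irrefl _ (mem_filter.mp h).2
  have hD : #D ≤ #M + 1 := by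
    rw [← card_filter_add_card_filter_not (p := fun d => d.snd ∈ S)]
    gcongr
    · rw [card_image_of_injOn]
      exact hP.injOn_snd_darts.mono fun d hd => by simp_all [D]
    · refine le_trans (card_le_card fun d hd => ?_) (P.card_filter_exit_le_one hu hv hcross)
      simp only [D, B, mem_filter, List.mem_toFinset] at hd ⊢
      exact ⟨hd.1.1, hd.1.2.1, hd.2⟩
  have hsub : A ∪ Boff ∪ M ⊆ S.erase u := by
    intro x hx
    simp only [A, Boff, B, M, D, mem_union, mem_filter, mem_image, List.mem_toFinset] at hx
    rcases hx with (hx | hx) | ⟨d, ⟨⟨hd, -⟩, hdS⟩, rfl⟩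
    · exact mem_erase.mpr ⟨hx.2.ne.symm, hx.1⟩
    · exact mem_erase.mpr ⟨fun h => hx.2 (h ▸ P.start_mem_support), hx.1.1⟩
    · exact mem_erase.mpr ⟨hP.snd_ne_start_of_mem_darts hd, hdS⟩
  have hAB : Disjoint A Boff := by
    refine Finset.disjoint_left.mpr fun x hxA hxB => ?_
    simp only [A, Boff, B, mem_filter] at hxA hxB
    exact hG.not_adj_and_adj_of_notMem_support hu hv hxA.1 hne hP hlen hcross hxB.2
      ⟨hxA.2, hxB.1.2⟩
  have hAM : Disjoint A M := by
    refine Finset.disjoint_left.mpr fun x hxA hxM => ?_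
    simp only [A, M, D, B, mem_filter, mem_image, List.mem_toFinset] at hxA hxM
    obtain ⟨d, ⟨⟨hd, hdS, hdv⟩, -⟩, rfl⟩ := hxM
    exact hG.not_adj_and_adj_of_mem_darts hu hv huv hP hlen hcross hd hdS hxA.1 ⟨hdv, hxA.2⟩
  have hBM : Disjoint Boff M := by
    refine Finset.disjoint_left.mpr fun x hxB hxM => ?_
    simp only [Boff, M, D, mem_filter, mem_image, List.mem_toFinset] at hxB hxM
    obtain ⟨d, ⟨⟨hd, -⟩, -⟩, rfl⟩ := hxM
    exact hxB.2 (P.dart_snd_mem_support_of_mem_darts hd)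
  calc #A + #B ≤ #A + #Boff + #M + 1 := by omega
    _ = #(A ∪ Boff ∪ M) + 1 := by
      rw [card_union_of_disjoint (disjoint_union_left.mpr ⟨hAM, hBM⟩),
        card_union_of_disjoint hAB]
    _ ≤ #(S.erase u) + 1 := by gcongr
    _ = #S := card_erase_add_one hu

theorem LocalCycleBound.sup_fromEdgeSet (hG : LocalCycleBound G ↑S #S)
    {u v : V} (hu : u ∈ S) (hv : v ∈ S) (hne : u ≠ v) (huv : ¬ G.Adj u v)
    (hdeg : #S + 1 ≤ degIn G ↑S u + degIn G ↑S v) :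
    LocalCycleBound (G ⊔ fromEdgeSet {s(u, v)}) ↑S #S := by
  intro w q hq hcross
  by_contra! hlen
  by_cases he : s(u, v) ∈ q.edges
  · rw [edges_eq_map_darts, List.mem_map] at he
    obtain ⟨⟨⟨x, y⟩, hxy⟩, hd, hde⟩ := he
    obtain ⟨r, hr, hperm⟩ := hq.exists_isPath_of_mem_darts hd
    have hnot := (List.nodup_cons.mp (hperm.nodup_iff.mp hq.edges_nodup)).1
    rw [hde] at hnot
    have hrG : ∀ e ∈ r.edges, e ∈ G.edgeSet := fun e he =>
      mem_edgeSet_of_mem_edgeSet_sup_fromEdgeSet (r.edges_subset_edgeSet he) fun h =>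
        hnot (h ▸ he)
    have hrlen : q.length = r.length + 1 := by
      simpa only [length_edges, List.length_cons] using hperm.length_eq
    have hrcross : crossCount ↑S r.edges ≤ 2 := by
      rwa [hperm.crossCount_eq, hde, crossCount_cons_mk_of_mem hu hv] at hcross
    rcases Sym2.eq_iff.mp (show s(x, y) = s(u, v) from hde) with ⟨rfl, rfl⟩ | ⟨rfl, rfl⟩
    · have := hG.degIn_add_degIn_le hv hu hne.symm (fun h => huv h.symm) (hr.transfer hrG)
        (by rw [length_transfer]; omega) (by rwa [edges_transfer])
      omega
    · have := hG.degIn_add_degIn_le hu hv hne huv (hr.transfer hrG)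
        (by rw [length_transfer]; omega) (by rwa [edges_transfer])
      omega
  · have hqG : ∀ e ∈ q.edges, e ∈ G.edgeSet := fun e he' =>
      mem_edgeSet_of_mem_edgeSet_sup_fromEdgeSet (q.edges_subset_edgeSet he')
        fun h => he (h ▸ he')
    have := hG w (q.transfer G hqG) (hq.transfer hqG) (by rwa [edges_transfer])
    rw [length_transfer] at this
    omega

theorem LocalCycleBound.of_reflTransGen_cStep {H : SimpleGraph V}
    (hG : LocalCycleBound G ↑S #S) (h : Relation.ReflTransGen (CStep #S ↑S) G H) :
    LocalCycleBound H ↑S #S := by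
  induction h with
  | refl => exact hG
  | tail _ hstep ih =>
    obtain ⟨u, v, hu, hv, hne, huv, hdeg, rfl⟩ := hstep
    exact ih.sup_fromEdgeSet hu hv hne huv hdeg

end SimpleGraph

theorem stmt15_general {V : Type*} (G H : SimpleGraph V)
    (v0 : V) (p : G.Walk v0 v0) (hC : IsLocallyMaximal G p)
    (hH : IsCClosure G p H) (hle : G ≤ H) :
    IsLocallyMaximal H (p.mapLe hle) := by
  classical
  set S := p.support.toFinset
  have hS : {x | x ∈ p.support} = ↑S := by ext; simp [S]
  have hcard : S.card = p.length := hC.1.card_toFinset_support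
  have hG : LocalCycleBound G ↑S S.card := fun w q hq hcross => by
    have := hC.2 w q hq
    rw [hS] at this
    omega
  have hH' : LocalCycleBound H ↑S S.card := by
    have hclosure := hH.1
    rw [hS, ← hcard] at hclosure
    exact hG.of_reflTransGen_cStep hclosure
  refine ⟨(Walk.isCycle_mapLe hle).mpr hC.1, fun w q hq ⟨hlen, hcross⟩ => ?_⟩
  rw [Walk.support_mapLe_eq_support, hS] at hcross
  rw [Walk.length_mapLe] at hlen
  have := hH' w q hq hcross
  omega

/-- A locally maximal cycle of `G` remains locally maximal in the `C`-closure of `G`. -/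
theorem stmt15 {V : Type*} [Fintype V] (G H : SimpleGraph V)
    (v0 : V) (p : G.Walk v0 v0) (hC : IsLocallyMaximal G p)
    (hH : IsCClosure G p H) (hle : G ≤ H) :
    IsLocallyMaximal H (p.mapLe hle) :=
  stmt15_general G H v0 p hC hH hle
end

section
/- Let G be a 2-connected graph on n vertices and C a locally maximal cycle in G of length c ≤ n-1. Then the C-closure of G restricted to V(C) is not Hamiltonian-connected. -/
open SimpleGraph

/-!
Adding an edge `uv` with `d(u) + d(v) ≥ |V(C)| + 1` inside `V(C)` cannot make `G[V(C)]`
Hamiltonian-connected: a Hamiltonian path through `uv` is rerouted around it by a 2-opt move, which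
exists by Ore's counting argument. So if the closure restricted to `V(C)` were
Hamiltonian-connected, so would be `G[V(C)]`. As `c < n`, some vertex lies off `C`, and
2-connectivity gives an ear of `C`, a path `x ⋯ y` between distinct vertices of `C` whose inner
vertices avoid `C`. Closing it with a Hamiltonian path of `G[V(C)]` from `y` to `x` yields a cycle
longer than `C` with only two edges leaving `V(C)`, contradicting local maximality.
-/

def reverseIoc (a b i : ℕ) : ℕ := if a < i ∧ i ≤ b then a + b + 1 - i else i

lemma reverseIoc_of_le {a b i : ℕ} (h : i ≤ a) : reverseIoc a b i = i := by
  simp [reverseIoc]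
  omega

lemma reverseIoc_of_lt {a b i : ℕ} (h : b < i) : reverseIoc a b i = i := by
  simp [reverseIoc]
  omega

lemma reverseIoc_involutive (a b : ℕ) : Function.Involutive (reverseIoc a b) := by
  intro i
  unfold reverseIoc
  split_ifs <;> omega

section HamiltonianPaths

variable {W : Type*} {K : SimpleGraph W}

/-- The 2-opt move on the path `f 0, …, f m`: trade the edges `f a f (a+1)` and `f b f (b+1)` for
`f a f b` and `f (a+1) f (b+1)`. -/
lemma adj_comp_reverseIoc {f : ℕ → W} {m a b : ℕ} (hab : a < b) (hbm : b < m)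
    (hf : ∀ i < m, i ≠ a → i ≠ b → K.Adj (f i) (f (i + 1)))
    (h₁ : K.Adj (f a) (f b)) (h₂ : K.Adj (f (a + 1)) (f (b + 1))) :
    ∀ i < m, K.Adj (f (reverseIoc a b i)) (f (reverseIoc a b (i + 1))) := by
  intro i hi
  unfold reverseIoc
  rcases lt_trichotomy i a with hia | rfl | hai
  · rw [if_neg (by omega), if_neg (by omega)]
    exact hf i hi (by omega) (by omega)
  · rw [if_neg (by omega), if_pos (by omega), show i + b + 1 - (i + 1) = b by omega]
    exact h₁
  rcases lt_trichotomy i b with hib | rfl | hbi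
  · rw [if_pos (by omega), if_pos (by omega)]
    have := hf (a + b - i) (by omega) (by omega) (by omega)
    rw [show a + b - i + 1 = a + b + 1 - i by omega, show a + b - i = a + b + 1 - (i + 1) by omega]
      at this
    exact this.symm
  · rw [if_pos (by omega), if_neg (by omega), show a + i + 1 - i = a + 1 by omega]
    exact h₂
  · rw [if_neg (by omega), if_neg (by omega)]
    exact hf i hi (by omega) (by omega)

lemma injOn_comp_reverseIoc {f : ℕ → W} {m a b : ℕ} (hbm : b ≤ m)
    (hf : Set.InjOn f {i | i ≤ m}) : Set.InjOn (f ∘ reverseIoc a b) {i | i ≤ m} := by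
  refine hf.comp (reverseIoc_involutive a b).injective.injOn fun i hi => ?_
  simp only [Set.mem_ofPred_eq, reverseIoc] at hi ⊢
  split_ifs <;> omega

lemma exists_walk_getVert_eq (f : ℕ → W) (m : ℕ) (hf : ∀ i < m, K.Adj (f i) (f (i + 1))) :
    ∃ P : K.Walk (f 0) (f m), P.length = m ∧ ∀ i ≤ m, P.getVert i = f i := by
  induction m generalizing f with
  | zero => exact ⟨.nil, rfl, fun i hi => by simp [Nat.le_zero.mp hi]⟩
  | succ m ih =>
    obtain ⟨P, hlen, hP⟩ := ih (fun i => f (i + 1)) fun i hi => hf (i + 1) (by omega)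
    refine ⟨.cons (hf 0 (by omega)) P, by simp [hlen], fun i hi => ?_⟩
    cases i with
    | zero => rfl
    | succ i => simpa using hP i (by omega)

lemma exists_isHamiltonian_of_injOn [Fintype W] [DecidableEq W] {f : ℕ → W}
    (hf : ∀ i < Fintype.card W - 1, K.Adj (f i) (f (i + 1)))
    (hinj : Set.InjOn f {i | i ≤ Fintype.card W - 1}) :
    ∃ P : K.Walk (f 0) (f (Fintype.card W - 1)), P.IsHamiltonian := by
  obtain ⟨P, hlen, hP⟩ := exists_walk_getVert_eq f _ hf
  refine ⟨P, Walk.isHamiltonian_iff_isPath_and_length_eq.mpr ⟨?_, hlen⟩⟩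
  rw [← Walk.IsPath.getVert_injOn_iff, hlen]
  exact hinj.congr fun i hi => (hP i hi).symm

lemma ncard_neighborSet_eq_card_filter {f : ℕ → W} {m : ℕ} (hinj : Set.InjOn f {i | i ≤ m})
    (hsurj : ∀ w, ∃ i ≤ m, f i = w) (w : W) [DecidablePred (K.Adj w)] :
    (K.neighborSet w).ncard = ((Finset.range (m + 1)).filter fun i => K.Adj w (f i)).card := by
  have hN : K.neighborSet w = f '' ↑((Finset.range (m + 1)).filter fun i => K.Adj w (f i)) := by
    ext z
    obtain ⟨i, hi, rfl⟩ := hsurj z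
    simp only [mem_neighborSet, Set.mem_image, Finset.coe_filter, Finset.mem_range,
      Set.mem_ofPred_eq]
    exact ⟨fun h => ⟨i, ⟨by omega, h⟩, rfl⟩, fun ⟨j, hj, hji⟩ => hji ▸ hj.2⟩
  rw [hN, (hinj.mono fun i hi => by simp at hi; simp; omega).ncard_image, Set.ncard_coe_finset]

/-- Ore's count: otherwise `{j | f k ~ f j}` and `{j | f (k+1) ~ f (j+1)}` would be disjoint
subsets of `range m \ {k}` of total size at least `m`. -/
lemma exists_adj_adj_succ {f : ℕ → W} {m k : ℕ} (hinj : Set.InjOn f {i | i ≤ m})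
    (hsurj : ∀ w, ∃ i ≤ m, f i = w) (hk : k < m)
    (hdeg : m + 2 ≤ (K.neighborSet (f k)).ncard + (K.neighborSet (f (k + 1))).ncard) :
    ∃ j < m, K.Adj (f k) (f j) ∧ K.Adj (f (k + 1)) (f (j + 1)) := by
  classical
  by_contra! h
  have hu : (K.neighborSet (f k)).ncard ≤
      ∑ i ∈ Finset.range m, (if K.Adj (f k) (f i) then 1 else 0) + 1 := by
    rw [ncard_neighborSet_eq_card_filter hinj hsurj, Finset.card_filter, Finset.sum_range_succ]
    split_ifs <;> omega
  have hv : (K.neighborSet (f (k + 1))).ncard ≤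
      ∑ i ∈ Finset.range m, (if K.Adj (f (k + 1)) (f (i + 1)) then 1 else 0) + 1 := by
    rw [ncard_neighborSet_eq_card_filter hinj hsurj, Finset.card_filter, Finset.sum_range_succ']
    split_ifs <;> omega
  have hsum : ∑ i ∈ Finset.range m, ((if K.Adj (f k) (f i) then 1 else 0) +
      (if K.Adj (f (k + 1)) (f (i + 1)) then 1 else 0)) ≤ m - 1 := by
    rw [← Finset.add_sum_erase _ _ (Finset.mem_range.mpr hk), if_neg (K.irrefl),
      if_neg (K.irrefl), zero_add, zero_add]
    refine (Finset.sum_le_card_nsmul _ _ 1 fun i hi => ?_).trans ?_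
    · have := h i (Finset.mem_range.mp (Finset.mem_of_mem_erase hi))
      split_ifs <;> simp_all
    · simp [Finset.card_erase_of_mem (Finset.mem_range.mpr hk)]
  rw [Finset.sum_add_distrib] at hsum
  omega

lemma exists_path_enum_of_adj_adj {f : ℕ → W} {m a b : ℕ} (hab : a < b) (hbm : b < m)
    (hinj : Set.InjOn f {i | i ≤ m}) (hf : ∀ i < m, i ≠ a → i ≠ b → K.Adj (f i) (f (i + 1)))
    (h₁ : K.Adj (f a) (f b)) (h₂ : K.Adj (f (a + 1)) (f (b + 1))) :
    ∃ g : ℕ → W, g 0 = f 0 ∧ g m = f m ∧ Set.InjOn g {i | i ≤ m} ∧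
      ∀ i < m, K.Adj (g i) (g (i + 1)) :=
  ⟨f ∘ reverseIoc a b, by simp [reverseIoc_of_le], by simp [reverseIoc_of_lt hbm],
    injOn_comp_reverseIoc hbm.le hinj, adj_comp_reverseIoc hab hbm hf h₁ h₂⟩

lemma exists_path_enum_of_sup_edge {f : ℕ → W} {m : ℕ} {x y : W}
    (hinj : Set.InjOn f {i | i ≤ m}) (hsurj : ∀ w, ∃ i ≤ m, f i = w)
    (hadj : ∀ i < m, (K ⊔ fromEdgeSet {s(x, y)}).Adj (f i) (f (i + 1)))
    (hdeg : m + 2 ≤ (K.neighborSet x).ncard + (K.neighborSet y).ncard) :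
    ∃ g : ℕ → W, g 0 = f 0 ∧ g m = f m ∧ Set.InjOn g {i | i ≤ m} ∧
      ∀ i < m, K.Adj (g i) (g (i + 1)) := by
  by_cases hK : ∀ i < m, K.Adj (f i) (f (i + 1))
  · exact ⟨f, rfl, rfl, hinj, hK⟩
  push Not at hK
  obtain ⟨k, hk, hnadj⟩ := hK
  have hedge : s(f k, f (k + 1)) = s(x, y) :=
    ((fromEdgeSet_adj _).mp ((hadj k hk).resolve_left hnadj)).1
  have hother : ∀ i < m, i ≠ k → K.Adj (f i) (f (i + 1)) := by
    intro i hi hik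
    refine (hadj i hi).resolve_right fun he => hik ?_
    rcases Sym2.eq_iff.mp (((fromEdgeSet_adj _).mp he).1.trans hedge.symm) with
      ⟨he, -⟩ | ⟨he₁, he₂⟩
    · exact hinj (by simp; omega) (by simp; omega) he
    · have := hinj (by simp; omega) (by simp; omega) he₁
      have := hinj (by simp; omega) (by simp; omega) he₂
      omega
  have hdeg' : m + 2 ≤ (K.neighborSet (f k)).ncard + (K.neighborSet (f (k + 1))).ncard := by
    rcases Sym2.eq_iff.mp hedge with ⟨h₁, h₂⟩ | ⟨h₁, h₂⟩ <;> rw [h₁, h₂] <;> omega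
  obtain ⟨j, hj, hkj, hkj'⟩ := exists_adj_adj_succ hinj hsurj hk hdeg'
  rcases lt_trichotomy j k with hjk | rfl | hkj''
  · exact exists_path_enum_of_adj_adj hjk hk hinj
      (fun i hi _ hik => hother i hi hik) hkj.symm hkj'.symm
  · exact absurd hkj K.irrefl
  · exact exists_path_enum_of_adj_adj hkj'' hj hinj
      (fun i hi hik _ => hother i hi hik) hkj hkj'

/-- Bondy–Chvátal stability of Hamiltonian-connectedness under `(n+1)`-closure. -/
lemma HamConn.of_sup_edge [Fintype W] [DecidableEq W] {x y : W}
    (hdeg : Fintype.card W + 1 ≤ (K.neighborSet x).ncard + (K.neighborSet y).ncard)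
    (h : HamConn (K ⊔ fromEdgeSet {s(x, y)})) : HamConn K := by
  intro s t hst
  obtain ⟨P, hP⟩ := h s t hst
  have hlen : P.length = Fintype.card W - 1 := hP.length_eq
  have hsurj : ∀ w, ∃ i ≤ P.length, P.getVert i = w := fun w => by
    obtain ⟨i, hi, hle⟩ := Walk.mem_support_iff_exists_getVert.mp (hP.mem_support w)
    exact ⟨i, hle, hi⟩
  have hcard : 0 < Fintype.card W := Fintype.card_pos_iff.mpr ⟨s⟩
  obtain ⟨g, h₀, hm, hinj, hg⟩ := exists_path_enum_of_sup_edge hP.isPath.getVert_injOn hsurj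
    (fun i hi => P.adj_getVert_succ hi) (by omega)
  rw [P.getVert_zero] at h₀
  rw [P.getVert_length, hlen] at hm
  rw [← h₀, ← hm]
  rw [hlen] at hg hinj
  exact exists_isHamiltonian_of_injOn hg hinj

end HamiltonianPaths

section Closure

variable {V : Type*}

lemma degIn_eq_ncard_neighborSet_induce (G : SimpleGraph V) {S : Set V} {u : V} (hu : u ∈ S) :
    degIn G S u = ((G.induce S).neighborSet ⟨u, hu⟩).ncard := by
  have : Subtype.val '' (G.induce S).neighborSet ⟨u, hu⟩ = G.neighborSet u ∩ S := by
    ext z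
    simp
  rw [degIn, ← this, Set.ncard_image_of_injective _ Subtype.val_injective]

lemma induce_sup_fromEdgeSet (G : SimpleGraph V) {S : Set V} {u v : V} (hu : u ∈ S)
    (hv : v ∈ S) : (G ⊔ fromEdgeSet {s(u, v)}).induce S =
      G.induce S ⊔ fromEdgeSet {s((⟨u, hu⟩ : S), ⟨v, hv⟩)} := by
  ext a b
  simp only [comap_adj, Function.Embedding.coe_subtype, sup_adj, fromEdgeSet_adj,
    Set.mem_singleton_iff, Sym2.eq_iff, Subtype.ext_iff, ne_eq]

lemma HamConn.of_reflTransGen_cStep [DecidableEq V] {G H : SimpleGraph V} {c : ℕ} {S : Set V}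
    [Fintype S] (hS : Fintype.card S ≤ c) (hGH : Relation.ReflTransGen (CStep c S) G H)
    (hH : HamConn (H.induce S)) : HamConn (G.induce S) := by
  induction hGH using Relation.ReflTransGen.head_induction_on with
  | refl => exact hH
  | head hstep _ ih =>
    obtain ⟨u, v, hu, hv, -, -, hdeg, rfl⟩ := hstep
    rw [induce_sup_fromEdgeSet _ hu hv] at ih
    refine ih.of_sup_edge ?_
    rw [← degIn_eq_ncard_neighborSet_induce _ hu, ← degIn_eq_ncard_neighborSet_induce _ hv]
    omega

end Closure

section Ears

variable {V : Type*} {G : SimpleGraph V}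

lemma SimpleGraph.Walk.IsCycle.ncard_setOf_mem_support {u : V} {p : G.Walk u u}
    (hp : p.IsCycle) : {x | x ∈ p.support}.ncard = p.length := by
  classical
  have : {x | x ∈ p.support} = ↑p.support.tail.toFinset := by
    ext x
    simp only [Set.mem_ofPred_eq, List.coe_toFinset, p.mem_support_iff]
    exact ⟨fun h => h.elim (· ▸ Walk.end_mem_tail_support hp.not_nil) id, Or.inr⟩
  rw [this, Set.ncard_coe_finset, List.toFinset_card_of_nodup hp.support_nodup,
    List.length_tail, Walk.length_support, Nat.add_sub_cancel]

lemma TwoConnected.exists_walk_avoiding [Fintype V] (hG : TwoConnected G) {a b v : V}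
    (ha : a ≠ v) (hb : b ≠ v) : ∃ q : G.Walk a b, v ∉ q.support := by
  obtain ⟨q⟩ := (hG.2 v).preconnected ⟨a, by simpa⟩ ⟨b, by simpa⟩
  let q' : G.Walk a b := q.map (Subgraph.hom _)
  have hq' : q'.support = q.support.map Subtype.val := Walk.support_map _ _
  exact ⟨q', by simp [hq']⟩

lemma SimpleGraph.Walk.exists_adj_mem_of_not_mem {S : Set V} :
    ∀ {a b : V} (q : G.Walk a b), a ∉ S → b ∈ S →
      ∃ z x, x ∈ q.support ∧ x ∈ S ∧ G.Adj z x ∧ ∃ r : G.Walk a z, ∀ v ∈ r.support, v ∉ S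
  | _, _, .nil, ha, hb => absurd hb ha
  | a, _, .cons (v := a') h q, ha, hb => by
    by_cases ha' : a' ∈ S
    · exact ⟨a, a', by simp, ha', h, .nil, by simpa⟩
    · obtain ⟨z, x, hx, hxS, hzx, r, hr⟩ := q.exists_adj_mem_of_not_mem ha' hb
      exact ⟨z, x, by simp [hx], hxS, hzx, .cons h r, by simp_all⟩

/-- `x z₁ ⋯ z₂ y` is an ear of `S`: it joins two distinct vertices of `S` through vertices
off `S`. -/
lemma TwoConnected.exists_ear [Fintype V] (hG : TwoConnected G) {S : Set V} (hS : S.Nontrivial)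
    {w : V} (hw : w ∉ S) :
    ∃ x y z₁ z₂, x ∈ S ∧ y ∈ S ∧ x ≠ y ∧ G.Adj x z₁ ∧ G.Adj z₂ y ∧
      ∃ r : G.Walk z₁ z₂, r.IsPath ∧ ∀ v ∈ r.support, v ∉ S := by
  classical
  obtain ⟨c₁, hc₁, c₂, hc₂, hc⟩ := id hS
  obtain ⟨q₁, -⟩ := hG.exists_walk_avoiding (ne_of_mem_of_not_mem hc₂ hw).symm hc
  obtain ⟨z₁, x, -, hx, h₁, r₁, hr₁⟩ := q₁.exists_adj_mem_of_not_mem hw hc₁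
  obtain ⟨x', hx', hx'x⟩ := hS.exists_ne x
  obtain ⟨q₂, hq₂⟩ := hG.exists_walk_avoiding (ne_of_mem_of_not_mem hx hw).symm hx'x
  obtain ⟨z₂, y, hyq, hy, h₂, r₂, hr₂⟩ := q₂.exists_adj_mem_of_not_mem hw hx'
  refine ⟨x, y, z₁, z₂, hx, hy, fun h => hq₂ (h ▸ hyq), h₁.symm, h₂,
    (r₁.reverse.append r₂).bypass, Walk.bypass_isPath _, fun v hv => ?_⟩
  have := Walk.support_bypass_subset_support _ hv
  simp only [Walk.support_append, Walk.support_reverse, List.mem_append, List.mem_reverse] at this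
  exact this.elim (hr₁ v) fun h => hr₂ v (List.mem_of_mem_tail h)

lemma crossCount_edges_eq_zero {S : Set V} {u v : V} (p : G.Walk u v)
    (h : ∀ a ∈ p.support, ∀ b ∈ p.support, a ∈ S → b ∈ S) : crossCount S p.edges = 0 := by
  classical
  rw [crossCount, List.countP_eq_zero]
  intro e he
  rw [decide_eq_true_iff]
  rintro ⟨⟨a, ha, haS⟩, b, hb, hbS⟩
  exact hbS (h a (Walk.mem_support_of_mem_edges he ha) b (Walk.mem_support_of_mem_edges he hb)
    haS)

/-- Only the two edges at `x` and `y` of the cycle cross between `S` and its complement. -/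
lemma exists_isCycle_of_ear {S : Set V} {x y z₁ z₂ : V} (hxy : x ≠ y) (h₁ : G.Adj x z₁)
    (h₂ : G.Adj z₂ y) (r : G.Walk z₁ z₂) (hr : r.IsPath) (hrS : ∀ v ∈ r.support, v ∉ S)
    (q : G.Walk y x) (hq : q.IsPath) (hqS : ∀ v ∈ q.support, v ∈ S) :
    ∃ C : G.Walk x x, C.IsCycle ∧ q.length + 2 ≤ C.length ∧ crossCount S C.edges ≤ 2 := by
  classical
  have hx : x ∈ S := hqS x q.end_mem_support
  have hz₁ : z₁ ∉ S := hrS z₁ r.start_mem_support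
  have hz₂ : z₂ ∉ S := hrS z₂ r.end_mem_support
  refine ⟨.cons h₁ (r.append (.cons h₂ q)), ?_, by simp, ?_⟩
  · rw [Walk.cons_isCycle_iff, Walk.isPath_def, Walk.support_append, Walk.support_cons,
      List.tail_cons, List.nodup_append]
    refine ⟨⟨hr.support_nodup, hq.support_nodup, fun a ha b hb hab =>
      hrS a ha (hab ▸ hqS b hb)⟩, ?_⟩
    simp only [Walk.edges_append, Walk.edges_cons, List.mem_append, List.mem_cons, not_or]
    refine ⟨fun he => hrS x (r.fst_mem_support_of_mem_edges he) hx, fun he => ?_,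
      fun he => hz₁ (hqS z₁ (q.snd_mem_support_of_mem_edges he))⟩
    rcases Sym2.eq_iff.mp he with ⟨rfl, -⟩ | ⟨rfl, -⟩
    exacts [hz₂ hx, hxy rfl]
  · have hr0 := crossCount_edges_eq_zero (S := S) r fun a ha _ _ haS => absurd haS (hrS a ha)
    have hq0 := crossCount_edges_eq_zero (S := S) q fun _ _ b hb _ => hqS b hb
    simp only [crossCount, Walk.edges_cons, Walk.edges_append, List.countP_cons,
      List.countP_append] at hr0 hq0 ⊢
    split_ifs <;> omega

lemma HamConn.exists_isPath_induce [DecidableEq V] {S : Set V} [Fintype S]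
    (h : HamConn (G.induce S)) {x y : V} (hx : x ∈ S) (hy : y ∈ S) (hxy : x ≠ y) :
    ∃ q : G.Walk x y, q.IsPath ∧ q.length + 1 = Fintype.card S ∧ ∀ v ∈ q.support, v ∈ S := by
  obtain ⟨q, hq⟩ := h ⟨x, hx⟩ ⟨y, hy⟩ (by simpa using hxy)
  let q' : G.Walk x y := q.map (Embedding.induce S).toHom
  have hlen : q'.length = q.length := Walk.length_map _ _
  have hsupp : q'.support = q.support.map Subtype.val := Walk.support_map _ _
  refine ⟨q', hq.isPath.map Subtype.val_injective, ?_, fun v hv => ?_⟩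
  · rw [hlen, ← Walk.length_support, hq.length_support]
  · obtain ⟨v', -, rfl⟩ := List.mem_map.mp (hsupp ▸ hv)
    exact v'.2

end Ears

/-- If `G` is 2-connected on `n` vertices and `C` is a locally maximal cycle of length
`c ≤ n-1`, then the `C`-closure of `G` restricted to `V(C)` is not
Hamiltonian-connected. -/
theorem stmt16 {V : Type*} [Fintype V] [DecidableEq V] (G H : SimpleGraph V) (n c : ℕ)
    (hn : Fintype.card V = n) (hG : TwoConnected G)
    (v0 : V) (p : G.Walk v0 v0) (hC : IsLocallyMaximal G p) (hc : p.length = c)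
    (hcn : c ≤ n - 1) (hH : IsCClosure G p H) :
    ¬ HamConn (H.induce {x | x ∈ p.support}) := by
  intro hHam
  obtain ⟨hcyc, hmax⟩ := hC
  set S : Set V := {x | x ∈ p.support}
  have hS : Fintype.card S = c := by
    rw [← Set.toFinset_card, ← Set.ncard_eq_toFinset_card', hcyc.ncard_setOf_mem_support, hc]
  have hGS : HamConn (G.induce S) := .of_reflTransGen_cStep (hS.trans hc.symm).le hH.1 hHam
  obtain ⟨w, hw⟩ : ∃ w, w ∉ S := by
    by_contra! hall
    have := Fintype.card_le_of_surjective (fun v : S => v.1) fun v => ⟨⟨v, hall v⟩, rfl⟩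
    have := hG.1
    omega
  have hSnt : S.Nontrivial := by
    rw [← Set.one_lt_ncard_iff_nontrivial, hcyc.ncard_setOf_mem_support]
    have := hcyc.three_le_length
    omega
  obtain ⟨x, y, z₁, z₂, hx, hy, hxy, h₁, h₂, r, hr, hrS⟩ := hG.exists_ear hSnt hw
  obtain ⟨q, hq, hqlen, hqS⟩ := hGS.exists_isPath_induce hy hx hxy.symm
  obtain ⟨C, hCcyc, hClen, hcross⟩ := exists_isCycle_of_ear hxy h₁ h₂ r hr hrS q hq hqS
  exact hmax x C hCcyc ⟨by omega, hcross⟩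
end
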